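/- arXiv:2509.09648 — 2 statements merged into one kernel-verified Lean document; each statement's English description precedes it below -/
import Mathlib

section
/- As p → +∞, the (p+1)-th power of the maximum of u_p satisfies ‖u_p‖_∞^{p+1} = (p/2)(1 + o_p(1)), i.e. lim_{p→+∞} ‖u_p‖_∞^{p+1} / p = 1/2. -/
/-!
The energy `(p + 1) u'² + 2 u^(p+1)` is constant on `(-1, 1)`. At a mean-value point of `[0, 1]`
we have `u' = -u(0)`, whence `(p + 1) / 2 ≤ u(0)^(p-1)`. For the reverse bound split `[0, 1]` at
the point `t` where `u = θ u(0)`: on `[0, t]` concavity `u'' ≤ -(θ u(0))^p` bounds `t`, and on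
`[t, 1]` some `u'(c)` equals the mean slope `-θ u(0) / (1 - t)` while the energy gives
`(p + 1) u'(c)² ≥ 2 u(0)^(p+1) (1 - θ^(p+1))`, which bounds `1 - t`. With `θ = p^(-1/p)` the
two bounds add up to `u(0)^(p-1) / p ≤ 1/2 + o(1)`. So `u(0)^(p-1) / p → 1/2`, which forces
`u(0) → 1`, and `u(0)^(p+1) / p = (u(0)^(p-1) / p) · u(0)² → 1/2`.
-/

open Real Set Filter Topology

noncomputable section

/-- `u` is the (unique) positive solution of the one-dimensional Lane–Emden problem
`-u'' = u^p` on `(-1,1)` with `u(-1) = u(1) = 0`; it is even, positive on `(-1,1)`,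
decreasing on `[0,1]`, and its sup norm is attained at `0`. -/
def IsLaneEmden (p : ℝ) (u : ℝ → ℝ) : Prop :=
  ContDiff ℝ 2 u ∧
  (∀ t ∈ Ioo (-1 : ℝ) 1, deriv (deriv u) t = -(u t ^ p)) ∧
  u (-1) = 0 ∧ u 1 = 0 ∧
  (∀ t ∈ Ioo (-1 : ℝ) 1, 0 < u t) ∧
  (∀ t : ℝ, u (-t) = u t) ∧
  (∀ ⦃s t : ℝ⦄, s ∈ Icc (0 : ℝ) 1 → t ∈ Icc (0 : ℝ) 1 → s ≤ t → u t ≤ u s) ∧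
  (∀ t ∈ Icc (-1 : ℝ) 1, u t ≤ u 0)

theorem deriv_zero_of_even {f : ℝ → ℝ} (hf : ∀ x, f (-x) = f x) : deriv f 0 = 0 := by
  have h := deriv_comp_neg (f := f) (x := (0 : ℝ))
  simp only [hf, neg_zero] at h
  linarith

theorem Real.rpow_add_one_eq_rpow_sub_one_mul_sq {x : ℝ} (hx : 0 < x) (p : ℝ) :
    x ^ (p + 1) = x ^ (p - 1) * x ^ 2 := by
  rw [show p + 1 = p - 1 + 2 by ring, Real.rpow_add hx, Real.rpow_two]

theorem le_sub_half_mul_sq_of_deriv_deriv_le {f : ℝ → ℝ} {c t : ℝ} (hf : Differentiable ℝ f)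
    (hf' : Differentiable ℝ (deriv f)) (h0 : deriv f 0 = 0) (ht : 0 ≤ t)
    (hc : ∀ s ∈ Ioo 0 t, deriv (deriv f) s ≤ -c) :
    f t ≤ f 0 - c / 2 * t ^ 2 := by
  have hslope : ∀ s ∈ Icc 0 t, deriv f s + c * s ≤ 0 := by
    have hanti : AntitoneOn (fun s => deriv f s + c * s) (Icc 0 t) := by
      refine antitoneOn_of_hasDerivWithinAt_nonpos (convex_Icc 0 t)
        (f' := fun s => deriv (deriv f) s + c) (by have := hf'.continuous; fun_prop)
        (fun s _ => ?_) (fun s hs => ?_)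
      · exact ((hf' s).hasDerivAt.fun_add ((hasDerivAt_id' s).const_mul c)).hasDerivWithinAt
          |>.congr_deriv (by ring)
      · rw [interior_Icc] at hs
        linarith [hc s hs]
    intro s hs
    simpa [h0] using hanti (left_mem_Icc.2 ht) hs hs.1
  have hanti : AntitoneOn (fun s => f s + c / 2 * s ^ 2) (Icc 0 t) := by
    refine antitoneOn_of_hasDerivWithinAt_nonpos (convex_Icc 0 t)
      (f' := fun s => deriv f s + c * s) (by have := hf.continuous; fun_prop)
      (fun s _ => ?_) (fun s hs => ?_)
    · exact ((hf s).hasDerivAt.fun_add ((hasDerivAt_pow 2 s).const_mul (c / 2))).hasDerivWithinAt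
        |>.congr_deriv (by push_cast; ring)
    · rw [interior_Icc] at hs
      exact hslope s (Ioo_subset_Icc_self hs)
  have := hanti (left_mem_Icc.2 ht) (right_mem_Icc.2 ht) ht
  simp only [ne_eq, OfNat.ofNat_ne_zero, not_false_eq_true, zero_pow, mul_zero, add_zero] at this
  linarith

theorem le_sqrt_add_sqrt_sq_of_mul_sq_le {Q A B t : ℝ} (hQ : 0 ≤ Q) (ht : t ∈ Icc 0 1)
    (hA : Q * t ^ 2 ≤ A) (hB : Q * (1 - t) ^ 2 ≤ B) : Q ≤ (√A + √B) ^ 2 := by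
  have h1 : √Q * t ≤ √A := by
    rw [← Real.sqrt_sq ht.1, ← Real.sqrt_mul hQ]
    exact Real.sqrt_le_sqrt hA
  have h2 : √Q * (1 - t) ≤ √B := by
    rw [← Real.sqrt_sq (sub_nonneg.2 ht.2), ← Real.sqrt_mul hQ]
    exact Real.sqrt_le_sqrt hB
  calc Q = (√Q * t + √Q * (1 - t)) ^ 2 := by ring_nf; exact (Real.sq_sqrt hQ).symm
    _ ≤ (√A + √B) ^ 2 := by
      gcongr
      exact add_nonneg (mul_nonneg (Real.sqrt_nonneg Q) ht.1)
        (mul_nonneg (Real.sqrt_nonneg Q) (sub_nonneg.2 ht.2))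

theorem tendsto_sqrt_add_sqrt_sq :
    Tendsto (fun p : ℝ => (√(2 * (1 - p ^ (-1 / p))) +
      √((1 + p⁻¹) / (2 * (1 - p ^ (-1 / p) / p)))) ^ 2) atTop (𝓝 (1 / 2)) := by
  have hθ := tendsto_rpow_neg_div
  have hinv := tendsto_inv_atTop_zero (𝕜 := ℝ)
  have hnum := (tendsto_const_nhds (x := (1 : ℝ))).add hinv
  have hden := ((hθ.div_atTop tendsto_id).const_sub 1).const_mul 2
  have := ((((hθ.const_sub 1).const_mul 2).sqrt).add ((hnum.div hden (by norm_num)).sqrt)).pow 2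
  convert this using 2
  · rfl
  · simp

namespace IsLaneEmden

variable {p : ℝ} {u : ℝ → ℝ}

theorem differentiable (h : IsLaneEmden p u) : Differentiable ℝ u :=
  h.1.differentiable (by norm_num)

theorem differentiable_deriv (h : IsLaneEmden p u) : Differentiable ℝ (deriv u) :=
  h.1.differentiable_deriv_two

theorem deriv_deriv_eq (h : IsLaneEmden p u) {t : ℝ} (ht : t ∈ Ioo (-1) 1) :
    deriv (deriv u) t = -(u t ^ p) :=
  h.2.1 t ht

theorem apply_one (h : IsLaneEmden p u) : u 1 = 0 := h.2.2.2.1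

theorem pos (h : IsLaneEmden p u) {t : ℝ} (ht : t ∈ Ioo (-1) 1) : 0 < u t := h.2.2.2.2.1 t ht

theorem antitoneOn (h : IsLaneEmden p u) : AntitoneOn u (Icc 0 1) :=
  fun _ hs _ ht hst => h.2.2.2.2.2.2.1 hs ht hst

theorem deriv_zero (h : IsLaneEmden p u) : deriv u 0 = 0 :=
  deriv_zero_of_even h.2.2.2.2.2.1

theorem apply_zero_pos (h : IsLaneEmden p u) : 0 < u 0 := h.pos (by norm_num)

theorem nonneg (h : IsLaneEmden p u) {t : ℝ} (ht : t ∈ Icc 0 1) : 0 ≤ u t :=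
  h.apply_one ▸ h.antitoneOn ht (right_mem_Icc.2 zero_le_one) ht.2

theorem energy (h : IsLaneEmden p u) {t : ℝ} (ht : t ∈ Ioo (-1) 1) :
    (p + 1) * deriv u t ^ 2 + 2 * u t ^ (p + 1) = 2 * u 0 ^ (p + 1) := by
  let E : ℝ → ℝ := fun s => (p + 1) * deriv u s ^ 2 + 2 * u s ^ (p + 1)
  have hE : ∀ s ∈ Ioo (-1 : ℝ) 1, HasDerivAt E 0 s := fun s hs => by
    refine (((h.differentiable_deriv s).hasDerivAt.pow 2).const_mul (p + 1) |>.fun_add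
      (((h.differentiable s).hasDerivAt.rpow_const (p := p + 1) (Or.inl (h.pos hs).ne')).const_mul
        2)).congr_deriv ?_
    rw [h.deriv_deriv_eq hs]
    simp only [add_sub_cancel_right]
    push_cast
    ring
  exact isOpen_Ioo.is_const_of_deriv_eq_zero isPreconnected_Ioo
    (fun s hs => (hE s hs).differentiableAt.differentiableWithinAt)
    (fun s hs => (hE s hs).deriv) ht (show (0 : ℝ) ∈ Ioo (-1) 1 by norm_num)
    |>.trans (by simp [E, h.deriv_zero])

theorem exists_add_one_mul_sq_eq (h : IsLaneEmden p u) {t : ℝ} (ht : t ∈ Ico 0 1) :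
    ∃ c ∈ Ioo t 1, (p + 1) * u t ^ 2 = 2 * (u 0 ^ (p + 1) - u c ^ (p + 1)) * (1 - t) ^ 2 := by
  obtain ⟨c, hc, hslope⟩ := exists_deriv_eq_slope u ht.2
    h.differentiable.continuous.continuousOn h.differentiable.differentiableOn
  refine ⟨c, hc, ?_⟩
  have hE := h.energy (t := c) ⟨by linarith [ht.1, hc.1], hc.2⟩
  rw [hslope, h.apply_one] at hE
  have : 1 - t ≠ 0 := sub_ne_zero.2 ht.2.ne'
  field_simp at hE
  linear_combination hE

theorem add_one_div_two_le_rpow_sub_one (h : IsLaneEmden p u) : (p + 1) / 2 ≤ u 0 ^ (p - 1) := by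
  obtain ⟨c, hc, heq⟩ := h.exists_add_one_mul_sq_eq (t := 0) ⟨le_rfl, zero_lt_one⟩
  have hM := h.apply_zero_pos
  have hc_nonneg : 0 ≤ u c ^ (p + 1) := Real.rpow_nonneg (h.nonneg ⟨hc.1.le, hc.2.le⟩) _
  rw [Real.rpow_add_one_eq_rpow_sub_one_mul_sq hM] at heq
  have : (p + 1) / 2 * u 0 ^ 2 ≤ u 0 ^ (p - 1) * u 0 ^ 2 := by nlinarith
  exact le_of_mul_le_mul_right this (by positivity)

theorem rpow_mul_sq_le (h : IsLaneEmden p u) (hp : 0 ≤ p) {t : ℝ} (ht : t ∈ Ico 0 1) :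
    u t ^ p * t ^ 2 ≤ 2 * (u 0 - u t) := by
  have := le_sub_half_mul_sq_of_deriv_deriv_le (c := u t ^ p) h.differentiable
    h.differentiable_deriv h.deriv_zero ht.1 fun s hs => by
      rw [h.deriv_deriv_eq ⟨by linarith [hs.1], hs.2.trans ht.2⟩, neg_le_neg_iff]
      exact Real.rpow_le_rpow (h.nonneg ⟨ht.1, ht.2.le⟩)
        (h.antitoneOn ⟨hs.1.le, by linarith [hs.2, ht.2]⟩ ⟨ht.1, ht.2.le⟩ hs.2.le) hp
  linarith

theorem rpow_sub_rpow_mul_sq_le (h : IsLaneEmden p u) (hp : 0 ≤ p + 1) {t : ℝ}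
    (ht : t ∈ Ico 0 1) :
    2 * (u 0 ^ (p + 1) - u t ^ (p + 1)) * (1 - t) ^ 2 ≤ (p + 1) * u t ^ 2 := by
  obtain ⟨c, hc, heq⟩ := h.exists_add_one_mul_sq_eq ht
  have hc_le : u c ^ (p + 1) ≤ u t ^ (p + 1) :=
    Real.rpow_le_rpow (h.nonneg ⟨by linarith [ht.1, hc.1], hc.2.le⟩)
      (h.antitoneOn ⟨ht.1, ht.2.le⟩ ⟨by linarith [ht.1, hc.1], hc.2.le⟩ hc.1.le) hp
  rw [heq]
  nlinarith [sq_nonneg (1 - t)]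

theorem exists_rpow_sub_one_mul_sq_le (h : IsLaneEmden p u) (hp : 0 ≤ p) {θ : ℝ}
    (hθ : θ ∈ Ioo 0 1) :
    ∃ t ∈ Icc (0 : ℝ) 1, u 0 ^ (p - 1) * θ ^ p * t ^ 2 ≤ 2 * (1 - θ) ∧
      u 0 ^ (p - 1) * (2 * (1 - θ ^ (p + 1))) * (1 - t) ^ 2 ≤ p + 1 := by
  have hM := h.apply_zero_pos
  have hθM : 0 < θ * u 0 := mul_pos hθ.1 hM
  obtain ⟨t, ht, hut⟩ := intermediate_value_Icc' zero_le_one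
    h.differentiable.continuous.continuousOn
    (show θ * u 0 ∈ Icc (u 1) (u 0) from ⟨h.apply_one ▸ hθM.le, by nlinarith [hθ.2]⟩)
  have ht1 : t < 1 := ht.2.lt_of_ne (by rintro rfl; linarith [h.apply_one])
  refine ⟨t, ht, ?_, ?_⟩
  · have h1 := h.rpow_mul_sq_le hp ⟨ht.1, ht1⟩
    have hMp : u 0 ^ p = u 0 ^ (p - 1) * u 0 := by
      rw [← Real.rpow_add_one hM.ne', sub_add_cancel]
    rw [hut, Real.mul_rpow hθ.1.le hM.le, hMp] at h1
    exact le_of_mul_le_mul_right (by linear_combination h1) hM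
  · have h2 := h.rpow_sub_rpow_mul_sq_le (by linarith) ⟨ht.1, ht1⟩
    rw [hut, Real.mul_rpow hθ.1.le hM.le, Real.rpow_add_one_eq_rpow_sub_one_mul_sq hM] at h2
    have hθ_sq : θ ^ 2 ≤ 1 := pow_le_one₀ hθ.1.le hθ.2.le
    refine le_of_mul_le_mul_right ?_ (pow_pos hM 2)
    calc u 0 ^ (p - 1) * (2 * (1 - θ ^ (p + 1))) * (1 - t) ^ 2 * u 0 ^ 2
        = 2 * (u 0 ^ (p - 1) * u 0 ^ 2 - θ ^ (p + 1) * (u 0 ^ (p - 1) * u 0 ^ 2))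
            * (1 - t) ^ 2 := by ring
      _ ≤ (p + 1) * (θ ^ 2 * u 0 ^ 2) := by rwa [← mul_pow]
      _ ≤ (p + 1) * u 0 ^ 2 := by gcongr; exact mul_le_of_le_one_left (sq_nonneg _) hθ_sq

theorem rpow_sub_one_div_le (h : IsLaneEmden p u) (hp : 1 < p) :
    u 0 ^ (p - 1) / p ≤
      (√(2 * (1 - p ^ (-1 / p))) + √((1 + p⁻¹) / (2 * (1 - p ^ (-1 / p) / p)))) ^ 2 := by
  have hp0 : 0 < p := by linarith
  set θ := p ^ (-1 / p)
  have hθ_pow : θ ^ p = p⁻¹ := by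
    rw [← Real.rpow_mul hp0.le, div_mul_cancel₀ _ hp0.ne', Real.rpow_neg_one]
  have hθ : θ ∈ Ioo 0 1 :=
    ⟨Real.rpow_pos_of_pos hp0 _, Real.rpow_lt_one_of_one_lt_of_neg hp
      (div_neg_of_neg_of_pos (by norm_num) hp0)⟩
  obtain ⟨t, ht, h1, h2⟩ := h.exists_rpow_sub_one_mul_sq_le hp0.le hθ
  rw [Real.rpow_add hθ.1, Real.rpow_one, hθ_pow] at h2
  rw [hθ_pow] at h1
  have hQ : 0 ≤ u 0 ^ (p - 1) / p := div_nonneg (Real.rpow_nonneg h.apply_zero_pos.le _) hp0.le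
  refine le_sqrt_add_sqrt_sq_of_mul_sq_le hQ ht (by simpa [div_eq_mul_inv] using h1) ?_
  have hθp : θ / p < 1 := (div_lt_one hp0).2 (hθ.2.trans hp)
  rw [le_div_iff₀ (by linarith)]
  calc u 0 ^ (p - 1) / p * (1 - t) ^ 2 * (2 * (1 - θ / p))
      = u 0 ^ (p - 1) * (2 * (1 - p⁻¹ * θ)) * (1 - t) ^ 2 / p := by ring
    _ ≤ (p + 1) / p := by gcongr
    _ = 1 + p⁻¹ := by field_simp

end IsLaneEmden

theorem tendsto_laneEmden_rpow_sub_one_div {u : ℝ → ℝ → ℝ}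
    (hu : ∀ p : ℝ, 1 < p → IsLaneEmden p (u p)) :
    Tendsto (fun p => u p 0 ^ (p - 1) / p) atTop (𝓝 (1 / 2)) := by
  have hlower : Tendsto (fun p : ℝ => (1 + p⁻¹) / 2) atTop (𝓝 (1 / 2)) := by
    simpa using (tendsto_inv_atTop_zero.const_add 1).div_const (2 : ℝ)
  refine tendsto_of_tendsto_of_tendsto_of_le_of_le' hlower tendsto_sqrt_add_sqrt_sq ?_ ?_
  · filter_upwards [eventually_gt_atTop 1] with p hp
    have hp0 : 0 < p := by linarith
    calc (1 + p⁻¹) / 2 = (p + 1) / 2 / p := by field_simp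
      _ ≤ u p 0 ^ (p - 1) / p := by gcongr; exact (hu p hp).add_one_div_two_le_rpow_sub_one
  · filter_upwards [eventually_gt_atTop 1] with p hp using (hu p hp).rpow_sub_one_div_le hp

theorem tendsto_laneEmden_apply_zero {u : ℝ → ℝ → ℝ}
    (hu : ∀ p : ℝ, 1 < p → IsLaneEmden p (u p)) :
    Tendsto (fun p => u p 0) atTop (𝓝 1) := by
  have hupper : Tendsto (fun p : ℝ => p ^ (1 / (p - 1))) atTop (𝓝 1) := by
    simpa [sub_eq_add_neg] using tendsto_rpow_div_mul_add 1 1 (-1) one_ne_zero.symm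
  have hsmall : ∀ᶠ p in atTop, u p 0 ^ (p - 1) / p < 1 :=
    (tendsto_laneEmden_rpow_sub_one_div hu).eventually (gt_mem_nhds (by norm_num))
  refine tendsto_of_tendsto_of_tendsto_of_le_of_le' tendsto_const_nhds hupper ?_ ?_
  · filter_upwards [eventually_gt_atTop 1] with p hp
    have h := hu p hp
    by_contra! hlt
    have := Real.rpow_lt_one h.apply_zero_pos.le hlt (by linarith : 0 < p - 1)
    linarith [h.add_one_div_two_le_rpow_sub_one]
  · filter_upwards [eventually_gt_atTop 1, hsmall] with p hp hp_small
    have hM := (hu p hp).apply_zero_pos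
    have hQ : u p 0 ^ (p - 1) ≤ p := by
      rw [div_lt_one (by linarith)] at hp_small
      exact hp_small.le
    calc u p 0 = (u p 0 ^ (p - 1)) ^ (1 / (p - 1)) := by
          rw [← Real.rpow_mul hM.le, mul_one_div_cancel (by linarith), Real.rpow_one]
      _ ≤ p ^ (1 / (p - 1)) := by gcongr

/-- `‖u_p‖_∞^(p+1) = (p/2)(1 + o_p(1))` as `p → +∞`. -/
theorem sup_norm_pow_succ_asymptotics
    (u : ℝ → ℝ → ℝ) (hu : ∀ p : ℝ, 1 < p → IsLaneEmden p (u p)) :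
    Tendsto (fun p : ℝ => u p 0 ^ (p + 1) / p) atTop (𝓝 (1 / 2)) := by
  have h := (tendsto_laneEmden_rpow_sub_one_div hu).mul ((tendsto_laneEmden_apply_zero hu).pow 2)
  rw [one_pow, mul_one] at h
  refine h.congr' ?_
  filter_upwards [eventually_gt_atTop 1] with p hp
  rw [Real.rpow_add_one_eq_rpow_sub_one_mul_sq (hu p hp).apply_zero_pos]
  ring
end
end

section
/- As p → 1⁺, the functions p·u_p^{p-1} converge to the constant π²/4 uniformly on every compact subset of (-1,1): for every η ∈ (0,1), sup_{t ∈ [-η,η]} | p·u_p^{p-1}(t) - π²/4 | → 0 as p → 1⁺. -/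
/-!
The Wronskian `W = u' cos (k ·) + k u sin (k ·)` satisfies `W' = (u'' + k² u) cos (k ·)`, and for
`k = π / 2a` the cosine vanishes at `±a`, so the sign of `u'' + k² u` on `(-a, a)` decides the
sign of `u(-a) + u(a)`. For a Lane–Emden solution, `u'' + k² u = (k² - u^(p-1)) u`. Writing
`M_p = u_p(0)^(p-1)`, the comparison on `(-1, 1)` with `k = π / 2` gives `π²/4 ≤ M_p`; concavity
gives `u ≥ (1 - a) u(0)` on `[-a, a]`, and the comparison there gives
`(1 - a)^(p-1) M_p < π² / 4a²`. Letting `p → 1` and then `a → 1` yields `M_p → π²/4`, and on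
`[-η, η]` the function `p u_p^(p-1)` is squeezed between `p (1 - η)^(p-1) M_p` and `p M_p`.
-/

open Real Set Filter Topology

noncomputable section

section Sturm

variable {u : ℝ → ℝ}

def cosWronskian (u : ℝ → ℝ) (k s : ℝ) : ℝ :=
  deriv u s * cos (k * s) + k * u s * sin (k * s)

lemma hasDerivAt_cosWronskian (hu : ContDiff ℝ 2 u) (k t : ℝ) :
    HasDerivAt (cosWronskian u k) ((deriv (deriv u) t + k ^ 2 * u t) * cos (k * t)) t := by
  have hu' : HasDerivAt (deriv u) (deriv (deriv u) t) t :=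
    (hu.differentiable_deriv_two t).hasDerivAt
  have hu0 : HasDerivAt u (deriv u t) t := (hu.differentiable (by norm_num) t).hasDerivAt
  have hcos := (hasDerivAt_cos (k * t)).comp t ((hasDerivAt_id t).const_mul k)
  have hsin := (hasDerivAt_sin (k * t)).comp t ((hasDerivAt_id t).const_mul k)
  exact ((hu'.mul hcos).add ((hu0.const_mul k).mul hsin)).congr_deriv
    (by simp only [Function.comp_apply]; ring)

lemma continuous_cosWronskian (hu : ContDiff ℝ 2 u) (k : ℝ) : Continuous (cosWronskian u k) :=
  continuous_iff_continuousAt.2 fun t => (hasDerivAt_cosWronskian hu k t).continuousAt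

lemma cosWronskian_sub_cosWronskian_neg {a : ℝ} (ha : 0 < a) :
    cosWronskian u (π / (2 * a)) a - cosWronskian u (π / (2 * a)) (-a) =
      π / (2 * a) * (u (-a) + u a) := by
  have hka : π / (2 * a) * a = π / 2 := by field_simp
  simp only [cosWronskian, mul_neg, hka, cos_neg, sin_neg, cos_pi_div_two, sin_pi_div_two]
  ring

lemma cos_pi_div_two_mul_pos {a x : ℝ} (hx : x ∈ Ioo (-a) a) : 0 < cos (π / (2 * a) * x) := by
  have ha : 0 < a := by linarith [hx.1, hx.2]
  have hxa : |x / a| < 1 := by rw [abs_div, abs_of_pos ha, div_lt_one ha]; exact abs_lt.2 hx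
  apply cos_pos_of_mem_Ioo
  rw [show π / (2 * a) * x = π / 2 * (x / a) by field_simp]
  constructor <;> nlinarith [pi_pos, abs_lt.1 hxa]

lemma sturm_comparison_pos {a : ℝ} (hu : ContDiff ℝ 2 u) (ha : 0 < a)
    (h : ∀ x ∈ Ioo (-a) a, 0 < deriv (deriv u) x + (π / (2 * a)) ^ 2 * u x) :
    0 < u (-a) + u a := by
  have hmono : StrictMonoOn (cosWronskian u (π / (2 * a))) (Icc (-a) a) := by
    refine strictMonoOn_of_deriv_pos (convex_Icc _ _)
      (continuous_cosWronskian hu _).continuousOn fun x hx => ?_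
    rw [interior_Icc] at hx
    rw [(hasDerivAt_cosWronskian hu _ x).deriv]
    exact mul_pos (h x hx) (cos_pi_div_two_mul_pos hx)
  have hlt := hmono (left_mem_Icc.2 (by linarith)) (right_mem_Icc.2 (by linarith))
    (by linarith : -a < a)
  have hk : 0 < π / (2 * a) := by positivity
  have := cosWronskian_sub_cosWronskian_neg (u := u) ha
  exact pos_of_mul_pos_right (by linarith) hk.le

lemma sturm_comparison_nonpos {a : ℝ} (hu : ContDiff ℝ 2 u) (ha : 0 < a)
    (h : ∀ x ∈ Ioo (-a) a, deriv (deriv u) x + (π / (2 * a)) ^ 2 * u x ≤ 0) :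
    u (-a) + u a ≤ 0 := by
  have hanti : AntitoneOn (cosWronskian u (π / (2 * a))) (Icc (-a) a) := by
    refine antitoneOn_of_deriv_nonpos (convex_Icc _ _)
      (continuous_cosWronskian hu _).continuousOn
      (fun x _ => (hasDerivAt_cosWronskian hu _ x).differentiableAt.differentiableWithinAt)
      fun x hx => ?_
    rw [interior_Icc] at hx
    rw [(hasDerivAt_cosWronskian hu _ x).deriv]
    exact mul_nonpos_of_nonpos_of_nonneg (h x hx) (cos_pi_div_two_mul_pos hx).le
  have hle := hanti (left_mem_Icc.2 (by linarith)) (right_mem_Icc.2 (by linarith))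
    (by linarith : -a ≤ a)
  have hk : 0 < π / (2 * a) := by positivity
  have := cosWronskian_sub_cosWronskian_neg (u := u) ha
  exact nonpos_of_mul_nonpos_right (by linarith) hk

end Sturm

namespace IsLaneEmden

variable {p : ℝ} {u : ℝ → ℝ}

lemma concaveOn (h : IsLaneEmden p u) : ConcaveOn ℝ (Icc (-1) 1) u := by
  obtain ⟨hC, hode, -, -, hpos, -⟩ := h
  refine (strictConcaveOn_of_deriv2_neg (convex_Icc _ _) hC.continuous.continuousOn
    fun x hx => ?_).concaveOn
  rw [interior_Icc] at hx
  rw [Function.iterate_succ_apply, Function.iterate_one, hode x hx, neg_lt_zero]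
  exact rpow_pos_of_pos (hpos x hx) p

lemma one_sub_abs_mul_le (h : IsLaneEmden p u) {t : ℝ} (ht : t ∈ Icc (-1) 1) :
    (1 - |t|) * u 0 ≤ u t := by
  have hconc := h.concaveOn
  obtain ⟨-, -, -, h1, -, heven, -⟩ := h
  have hchord : ∀ s ∈ Icc (0 : ℝ) 1, (1 - s) * u 0 ≤ u s := fun s hs => by
    have := hconc.2 (by norm_num : (0 : ℝ) ∈ Icc (-1) 1) (by norm_num : (1 : ℝ) ∈ Icc (-1) 1)
      (sub_nonneg.2 hs.2) hs.1 (by ring)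
    simpa [h1] using this
  rcases le_total 0 t with ht0 | ht0
  · simpa [abs_of_nonneg ht0] using hchord t ⟨ht0, ht.2⟩
  · simpa [abs_of_nonpos ht0, heven t] using hchord (-t) ⟨neg_nonneg.2 ht0, by linarith [ht.1]⟩

lemma deriv2_add_mul_eq (h : IsLaneEmden p u) {x : ℝ} (hx : x ∈ Ioo (-1) 1) (c : ℝ) :
    deriv (deriv u) x + c * u x = (c - u x ^ (p - 1)) * u x := by
  obtain ⟨-, hode, -, -, hpos, -⟩ := h
  rw [hode x hx, rpow_sub_one (hpos x hx).ne']
  field_simp [(hpos x hx).ne']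
  ring

lemma pi_sq_div_four_le_rpow (h : IsLaneEmden p u) (hp : 1 ≤ p) : π ^ 2 / 4 ≤ u 0 ^ (p - 1) := by
  by_contra! hlt
  have hsum : 0 < u (-1) + u 1 := by
    refine sturm_comparison_pos h.1 one_pos fun x hx => ?_
    rw [h.deriv2_add_mul_eq hx]
    obtain ⟨-, -, -, -, hpos, -, -, hmax⟩ := h
    have hle : u x ^ (p - 1) ≤ u 0 ^ (p - 1) :=
      rpow_le_rpow (hpos x hx).le (hmax x (Ioo_subset_Icc_self hx)) (by linarith)
    have : (π / (2 * 1)) ^ 2 = π ^ 2 / 4 := by ring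
    exact mul_pos (by linarith) (hpos x hx)
  obtain ⟨-, -, hm1, h1, -⟩ := h
  rw [hm1, h1, add_zero] at hsum
  exact hsum.false

lemma rpow_lt_pi_sq_div (h : IsLaneEmden p u) (hp : 1 ≤ p) {a : ℝ} (ha0 : 0 < a) (ha1 : a < 1) :
    u 0 ^ (p - 1) < π ^ 2 / (4 * a ^ 2) / (1 - a) ^ (p - 1) := by
  have hpos : ∀ x ∈ Ioo (-1 : ℝ) 1, 0 < u x := h.2.2.2.2.1
  have hu0 := hpos 0 (by norm_num)
  rw [lt_div_iff₀ (rpow_pos_of_pos (by linarith) _), mul_comm, ← mul_rpow (by linarith) hu0.le]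
  by_contra! hge
  have hsum : u (-a) + u a ≤ 0 := by
    refine sturm_comparison_nonpos h.1 ha0 fun x hx => ?_
    have hx1 : x ∈ Ioo (-1) 1 := ⟨by linarith [hx.1], by linarith [hx.2]⟩
    rw [h.deriv2_add_mul_eq hx1]
    have hlow : (1 - a) * u 0 ≤ u x := by
      have := h.one_sub_abs_mul_le (Ioo_subset_Icc_self hx1)
      nlinarith [abs_lt.2 hx]
    have hk : (π / (2 * a)) ^ 2 = π ^ 2 / (4 * a ^ 2) := by ring
    have : (π / (2 * a)) ^ 2 ≤ u x ^ (p - 1) :=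
      hk ▸ hge.trans (rpow_le_rpow (by nlinarith) hlow (by linarith))
    exact mul_nonpos_of_nonpos_of_nonneg (by linarith) (hpos x hx1).le
  linarith [hpos a ⟨by linarith, ha1⟩, hpos (-a) ⟨by linarith, by linarith⟩]

lemma rpow_mem_Icc (h : IsLaneEmden p u) (hp : 1 ≤ p) {η t : ℝ} (hη : η ≤ 1)
    (ht : t ∈ Icc (-η) η) :
    u t ^ (p - 1) ∈ Icc ((1 - η) ^ (p - 1) * u 0 ^ (p - 1)) (u 0 ^ (p - 1)) := by
  have ht1 : t ∈ Icc (-1) 1 := ⟨by linarith [ht.1], by linarith [ht.2]⟩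
  have hu0 : 0 < u 0 := h.2.2.2.2.1 0 (by norm_num)
  have hlow : (1 - η) * u 0 ≤ u t := by
    have := h.one_sub_abs_mul_le ht1
    nlinarith [abs_le.2 ht]
  constructor
  · rw [← mul_rpow (by linarith) hu0.le]
    exact rpow_le_rpow (by positivity) hlow (by linarith)
  · exact rpow_le_rpow (by nlinarith) (h.2.2.2.2.2.2.2 t ht1) (by linarith)

end IsLaneEmden

lemma tendsto_rpow_sub_one_nhds_one {c : ℝ} (hc : 0 < c) :
    Tendsto (fun p : ℝ => c ^ (p - 1)) (𝓝 1) (𝓝 1) := by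
  have : Continuous fun p : ℝ => c ^ (p - 1) :=
    (continuous_const_rpow hc.ne').comp (continuous_sub_right 1)
  simpa using this.tendsto 1

lemma tendsto_laneEmden_rpow_sub_one {u : ℝ → ℝ → ℝ} (hu : ∀ p : ℝ, 1 < p → IsLaneEmden p (u p)) :
    Tendsto (fun p => u p 0 ^ (p - 1)) (𝓝[>] 1) (𝓝 (π ^ 2 / 4)) := by
  refine tendsto_order.2 ⟨fun b hb => eventually_nhdsWithin_of_forall fun p hp =>
    hb.trans_le ((hu p hp).pi_sq_div_four_le_rpow hp.le), fun b hb => ?_⟩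
  have hcoef : Tendsto (fun a : ℝ => π ^ 2 / (4 * a ^ 2)) (𝓝[<] 1) (𝓝 (π ^ 2 / 4)) := by
    have : ContinuousAt (fun a : ℝ => π ^ 2 / (4 * a ^ 2)) 1 := by fun_prop (disch := norm_num)
    simpa using this.tendsto.mono_left nhdsWithin_le_nhds
  obtain ⟨a, hab, ha⟩ :=
    ((hcoef.eventually (gt_mem_nhds hb)).and (Ioo_mem_nhdsLT zero_lt_one)).exists
  have hbound : Tendsto (fun p : ℝ => π ^ 2 / (4 * a ^ 2) / (1 - a) ^ (p - 1)) (𝓝[>] 1)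
      (𝓝 (π ^ 2 / (4 * a ^ 2))) := by
    have hpow := (tendsto_rpow_sub_one_nhds_one (sub_pos.2 ha.2)).mono_left
      (nhdsWithin_le_nhds (s := Ioi 1))
    simpa [Pi.div_def] using (tendsto_const_nhds (x := π ^ 2 / (4 * a ^ 2))).div hpow one_ne_zero
  filter_upwards [hbound.eventually (gt_mem_nhds hab), self_mem_nhdsWithin] with p hpb hp
  exact ((hu p hp).rpow_lt_pi_sq_div hp.le ha.1 ha.2).trans hpb

/-- As `p → 1⁺`, `p u_p^(p-1) → π²/4` uniformly on compact subsets of `(-1,1)`. -/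
theorem p_u_pow_tendsto_loc_uniform
    (u : ℝ → ℝ → ℝ) (hu : ∀ p : ℝ, 1 < p → IsLaneEmden p (u p)) :
    ∀ η : ℝ, 0 < η → η < 1 →
      ∀ ε > (0 : ℝ), ∃ δ > (0 : ℝ), ∀ p : ℝ, 1 < p → p < 1 + δ →
        ∀ t ∈ Icc (-η) η, |p * u p t ^ (p - 1) - π ^ 2 / 4| < ε := by
  intro η _ hη1 ε hε
  have hM := tendsto_laneEmden_rpow_sub_one hu
  have hid : Tendsto (fun p : ℝ => p) (𝓝[>] 1) (𝓝 1) := tendsto_id.mono_left nhdsWithin_le_nhds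
  have hlower : Tendsto (fun p => p * ((1 - η) ^ (p - 1) * u p 0 ^ (p - 1))) (𝓝[>] 1)
      (𝓝 (π ^ 2 / 4)) := by
    simpa using hid.mul (((tendsto_rpow_sub_one_nhds_one (sub_pos.2 hη1)).mono_left
      nhdsWithin_le_nhds).mul hM)
  have hupper : Tendsto (fun p => p * u p 0 ^ (p - 1)) (𝓝[>] 1) (𝓝 (π ^ 2 / 4)) := by
    simpa using hid.mul hM
  obtain ⟨q, hq1, hq⟩ := (nhdsGT_basis (1 : ℝ)).eventually_iff.1
    ((hlower.eventually (lt_mem_nhds (sub_lt_self _ hε))).and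
      (hupper.eventually (gt_mem_nhds (lt_add_of_pos_right _ hε))))
  refine ⟨q - 1, sub_pos.2 hq1, fun p hp hpq t ht => ?_⟩
  obtain ⟨hlower_p, hupper_p⟩ := hq ⟨hp, by linarith⟩
  obtain ⟨hl, hr⟩ := (hu p hp).rpow_mem_Icc hp.le hη1.le ht
  have hp0 : 0 ≤ p := by linarith
  rw [abs_sub_lt_iff]
  constructor
  · linarith [mul_le_mul_of_nonneg_left hr hp0]
  · linarith [mul_le_mul_of_nonneg_left hl hp0]
end
end
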